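/- Define Q_n by Q₀ = 1, Q₁(x) = x, and Q_{n+1}(x) = x Q_n(x) - β_n Q_{n-1}(x), where β_n = n+2 for odd n and β_n = n for even n. Then the Q_n are orthogonal with respect to the measure on ℝ with density f(t) = t² e^{-t²/2}/√(2π): for m ≠ n, ∫_ℝ Q_m(t) Q_n(t) t² e^{-t²/2}/√(2π) dt = 0. -/

import Mathlib

/-!
Write `Heₙ` for the probabilists' Hermite polynomials and `I(p) = ∫ p(t) e^{-t²/2} dt`.
Integration by parts gives `I(X p) = I(p')`, and with `Heₙ₊₁ = X Heₙ - Heₙ'` this turns into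
`I(Heₙ₊₁ p) = I(Heₙ p')`; hence `I(Heₙ p) = 0` whenever `deg p < n`. On the other hand the
recursion for `Q` matches the Hermite recursion `X Heₙ₊₁ = Heₙ₊₂ + (n + 1) Heₙ` in such a way
that `X² Qₙ = Heₙ₊₂ + γₙ Heₙ` for explicit constants `γₙ`. For `n < m` the integral in question
is then a multiple of `I(Heₘ₊₂ Qₙ) + γₘ I(Heₘ Qₙ) = 0`, as `deg Qₙ ≤ n`.
-/

open MeasureTheory Real Polynomial

noncomputable def β (n : ℕ) : ℝ := if Odd n then n + 2 else n

/-- `Q₀ = 1`, `Q₁ = X`, `Q_{n+2} = X * Q_{n+1} - β_{n+1} * Q_n`. -/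
noncomputable def Q : ℕ → Polynomial ℝ
  | 0 => 1
  | 1 => X
  | (n + 2) => X * Q (n + 1) - C (β (n + 1)) * Q n

namespace Polynomial

theorem derivative_hermite_succ (n : ℕ) :
    derivative (hermite (n + 1)) = ((n + 1 : ℕ) : ℤ[X]) * hermite n := by
  induction n with
  | zero => simp
  | succ n ih =>
    have ih' : derivative (derivative (hermite (n + 1))) =
        ((n + 1 : ℕ) : ℤ[X]) * derivative (hermite n) := by
      rw [ih, derivative_natCast_mul]
    rw [hermite_succ (n + 1), derivative_sub, derivative_mul, derivative_X, ih', ih,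
      hermite_succ n]
    push_cast
    ring

theorem X_mul_hermite_succ (n : ℕ) :
    X * hermite (n + 1) = hermite (n + 2) + ((n + 1 : ℕ) : ℤ[X]) * hermite n := by
  rw [hermite_succ (n + 1), derivative_hermite_succ]
  ring

end Polynomial

noncomputable def He (n : ℕ) : ℝ[X] := (hermite n).map (Int.castRingHom ℝ)

theorem He_zero : He 0 = 1 := by simp [He]

theorem He_one : He 1 = X := by simp [He]

theorem He_succ (n : ℕ) : He (n + 1) = X * He n - derivative (He n) := by
  simp only [He, hermite_succ, Polynomial.map_sub, Polynomial.map_mul, map_X, derivative_map]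

theorem X_mul_He_succ (n : ℕ) : X * He (n + 1) = He (n + 2) + ((n + 1 : ℕ) : ℝ[X]) * He n := by
  simpa only [He, Polynomial.map_mul, map_X, Polynomial.map_add, Polynomial.map_natCast]
    using congrArg (map (Int.castRingHom ℝ)) (X_mul_hermite_succ n)

theorem integrable_eval_mul_exp_neg_sq_div_two (p : ℝ[X]) :
    Integrable (fun t : ℝ => p.eval t * exp (-t ^ 2 / 2)) := by
  induction p using Polynomial.induction_on' with
  | add p q hp hq =>
    simp only [eval_add, add_mul]
    exact hp.add hq
  | monomial n a =>
    have h := integrable_rpow_mul_exp_neg_mul_sq (b := 1 / 2) (by norm_num)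
      (s := n) (by linarith [(n.cast_nonneg : (0 : ℝ) ≤ n)])
    refine (h.const_mul a).congr (ae_of_all _ fun t => ?_)
    simp only [eval_monomial, rpow_natCast]
    ring_nf

noncomputable def gaussianFunctional : ℝ[X] →ₗ[ℝ] ℝ where
  toFun p := ∫ t : ℝ, p.eval t * exp (-t ^ 2 / 2)
  map_add' p q := by
    simp only [eval_add, add_mul]
    exact integral_add (integrable_eval_mul_exp_neg_sq_div_two p)
      (integrable_eval_mul_exp_neg_sq_div_two q)
  map_smul' a p := by
    simp only [eval_smul, smul_eq_mul, mul_assoc, integral_const_mul, RingHom.id_apply]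

theorem gaussianFunctional_apply (p : ℝ[X]) :
    gaussianFunctional p = ∫ t : ℝ, p.eval t * exp (-t ^ 2 / 2) := rfl

theorem hasDerivAt_eval_mul_exp_neg_sq_div_two (p : ℝ[X]) (t : ℝ) :
    HasDerivAt (fun t : ℝ => p.eval t * exp (-t ^ 2 / 2))
      ((derivative p - X * p).eval t * exp (-t ^ 2 / 2)) t := by
  have h : HasDerivAt (fun t : ℝ => -t ^ 2 / 2) (-t) t :=
    ((hasDerivAt_pow 2 t).neg.div_const 2).congr_deriv (by ring)
  refine ((p.hasDerivAt t).mul h.exp).congr_deriv ?_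
  simp only [eval_sub, eval_mul, eval_X]
  ring

theorem gaussianFunctional_X_mul (p : ℝ[X]) :
    gaussianFunctional (X * p) = gaussianFunctional (derivative p) := by
  have h := integral_eq_zero_of_hasDerivAt_of_integrable
    (hasDerivAt_eval_mul_exp_neg_sq_div_two p) (integrable_eval_mul_exp_neg_sq_div_two _)
    (integrable_eval_mul_exp_neg_sq_div_two p)
  rw [← gaussianFunctional_apply, map_sub] at h
  linarith

theorem gaussianFunctional_He_succ_mul (n : ℕ) (p : ℝ[X]) :
    gaussianFunctional (He (n + 1) * p) = gaussianFunctional (He n * derivative p) := by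
  have h : He (n + 1) * p = X * (He n * p) - derivative (He n * p) + He n * derivative p := by
    rw [He_succ, derivative_mul]
    ring
  rw [h, map_add, map_sub, gaussianFunctional_X_mul, sub_self, zero_add]

theorem gaussianFunctional_He_mul_eq_zero {n : ℕ} {p : ℝ[X]} (hp : p.natDegree < n) :
    gaussianFunctional (He n * p) = 0 := by
  induction n generalizing p with
  | zero => exact absurd hp (Nat.not_lt_zero _)
  | succ n ih =>
    rw [gaussianFunctional_He_succ_mul]
    rcases eq_or_ne p.natDegree 0 with hp0 | hp0
    · rw [eq_C_of_natDegree_eq_zero hp0, derivative_C, mul_zero, map_zero]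
    · exact ih ((natDegree_derivative_lt hp0).trans_le (Nat.le_of_lt_succ hp))

theorem natDegree_Q_le (n : ℕ) : (Q n).natDegree ≤ n := by
  induction n using Nat.twoStepInduction with
  | zero => simp [Q]
  | one => simp [Q]
  | more n ih0 ih1 =>
    refine (natDegree_sub_le _ _).trans (max_le ?_ ?_)
    · exact natDegree_mul_le.trans (by linarith [natDegree_X_le (R := ℝ)])
    · exact natDegree_C_mul_le _ _ |>.trans (by omega)

noncomputable def γ (n : ℕ) : ℝ := if Odd n then n + 2 else n + 1

theorem β_succ_mul_γ (n : ℕ) : β (n + 1) * γ n = γ (n + 1) * (n + 1) := by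
  rcases Nat.mod_two_eq_zero_or_one n with hn | hn
  · simp [β, γ, Nat.odd_iff, Nat.add_mod, hn]
  · simp [β, γ, Nat.odd_iff, Nat.add_mod, hn]; ring

theorem γ_succ_succ (n : ℕ) : γ (n + 2) = γ (n + 1) - β (n + 1) + (n + 3) := by
  rcases Nat.mod_two_eq_zero_or_one n with hn | hn <;>
    (simp [β, γ, Nat.odd_iff, Nat.add_mod, hn]; ring)

theorem X_sq_mul_Q (n : ℕ) : X ^ 2 * Q n = He (n + 2) + C (γ n) * He n := by
  induction n using Nat.twoStepInduction with
  | zero =>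
    have x0 := X_mul_He_succ 0
    norm_num [He_zero, He_one] at x0
    norm_num [Q, γ, He_zero]
    linear_combination x0
  | one =>
    have x0 := X_mul_He_succ 0
    have x1 := X_mul_He_succ 1
    norm_num [He_zero, He_one] at x0 x1
    norm_num [Q, γ, He_one, map_ofNat]
    linear_combination x1 + X * x0
  | more n ih0 ih1 =>
    have hβγ : C (β (n + 1)) * C (γ n) = C (γ (n + 1)) * ((n : ℝ[X]) + 1) := by
      simpa using congrArg C (β_succ_mul_γ n)
    have hγ : C (γ (n + 2)) = C (γ (n + 1)) - C (β (n + 1)) + ((n : ℝ[X]) + 3) := by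
      simpa [map_ofNat] using congrArg C (γ_succ_succ n)
    have x1 := X_mul_He_succ n
    have x3 := X_mul_He_succ (n + 2)
    push_cast at x1 x3
    rw [Q, hγ]
    linear_combination X * ih1 - C (β (n + 1)) * ih0 + x3 + C (γ (n + 1)) * x1 - He n * hβγ

theorem integral_Q_mul_Q_mul_density (m n : ℕ) :
    (∫ t : ℝ, (Q m).eval t * (Q n).eval t * (t ^ 2 * exp (-t ^ 2 / 2) / √(2 * π))) =
      (√(2 * π))⁻¹ * gaussianFunctional (X ^ 2 * Q m * Q n) := by
  rw [gaussianFunctional_apply, ← integral_const_mul]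
  congr 1 with t
  simp only [eval_mul, eval_pow, eval_X]
  ring

theorem gaussianFunctional_X_sq_mul_Q_mul_Q {m n : ℕ} (h : n < m) :
    gaussianFunctional (X ^ 2 * Q m * Q n) = 0 := by
  have hn := natDegree_Q_le n
  rw [X_sq_mul_Q, add_mul, mul_assoc (C _), mul_left_comm, map_add,
    gaussianFunctional_He_mul_eq_zero (by omega),
    gaussianFunctional_He_mul_eq_zero ((natDegree_C_mul_le _ _).trans_lt (by omega)), add_zero]

theorem stmt10 (m n : ℕ) (h : m ≠ n) :
    (∫ t : ℝ, (Q m).eval t * (Q n).eval t *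
        (t ^ 2 * Real.exp (-t ^ 2 / 2) / Real.sqrt (2 * π))) = 0 := by
  rw [integral_Q_mul_Q_mul_density]
  rcases h.lt_or_gt with hmn | hnm
  · rw [mul_right_comm, gaussianFunctional_X_sq_mul_Q_mul_Q hmn, mul_zero]
  · rw [gaussianFunctional_X_sq_mul_Q_mul_Q hnm, mul_zero]
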